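/- Let (P₀, ι, a, p) be a PASP such that P₀ is OLON-free, let q be a ground atom, and let R ⊆ P₀ be a relevance-closed subprogram of P₀ with atom set B_R such that q ∈ B_R. Let ι_R = {i ∈ ι : aᵢ ∈ B_R}. Then the upper probability of q in the PASP (P₀, ι, a, p) equals the upper probability of q in the PASP (R, ι_R, a restricted to ι_R, p restricted to ι_R). -/

import Mathlib

open scoped Classical

/-- A ground normal rule: a head atom, a finite positive body and a finite negative body. -/
structure GRule (α : Type) where
  head : α
  pos : Finset α
  neg : Finset α

namespace ASP

variable {α ι : Type}

/-- The Gelfond–Lifschitz reduct of a program `P` w.r.t. an interpretation `I`: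
the set of positive rules `(head r, pos r)` for rules whose negative body avoids `I`. -/
def glReduct (P : Set (GRule α)) (I : Set α) : Set (α × Finset α) :=
  {hb | ∃ r ∈ P, (∀ c ∈ r.neg, c ∉ I) ∧ hb = (r.head, r.pos)}

/-- `J` is a model of a set of positive rules `Q`. -/
def IsModelPos (Q : Set (α × Finset α)) (J : Set α) : Prop :=
  ∀ hb ∈ Q, (∀ b ∈ hb.2, b ∈ J) → hb.1 ∈ J

/-- `A` is an answer set (stable model) of `P`. -/
def IsAnswerSet (P : Set (GRule α)) (A : Set α) : Prop :=
  IsModelPos (glReduct P A) A ∧ ∀ B, B ⊂ A → ¬ IsModelPos (glReduct P A) B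

/-- The set of answer sets of `P`. -/
def AS (P : Set (GRule α)) : Set (Set α) := {A | IsAnswerSet P A}

/-- Operator deriving new true atoms, given a three-valued interpretation `I = (I_T, I_F)`. -/
def opTrue (P : Set (GRule α)) (I : Set α × Set α) : Set α →o Set α where
  toFun T := {a | a ∉ I.1 ∧ ∃ r ∈ P, r.head = a ∧ (∀ b ∈ r.pos, b ∈ I.1 ∪ T) ∧
    ∀ c ∈ r.neg, c ∈ I.2}
  monotone' := by
    intro T T' hT a ha
    obtain ⟨h1, r, hr, hh, hp, hn⟩ := ha
    exact ⟨h1, r, hr, hh, fun b hb => (hp b hb).imp id fun h => hT h, hn⟩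

/-- Operator deriving new false atoms, given a three-valued interpretation `I = (I_T, I_F)`. -/
def opFalse (P : Set (GRule α)) (I : Set α × Set α) : Set α →o Set α where
  toFun F := {a | a ∉ I.2 ∧ ∀ r ∈ P, r.head = a →
    (∃ b ∈ r.pos, b ∈ I.2 ∪ F) ∨ ∃ c ∈ r.neg, c ∈ I.1}
  monotone' := by
    intro F F' hF a ha
    refine ⟨ha.1, fun r hr hh => ?_⟩
    rcases ha.2 r hr hh with ⟨b, hb, hbm⟩ | h
    · exact Or.inl ⟨b, hb, hbm.imp id fun h => hF h⟩
    · exact Or.inr h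

/-- The iterated fixpoint operator: `IFP(I) = I ⊔ (lfp (opTrue I), gfp (opFalse I))`. -/
def IFP (P : Set (GRule α)) (I : Set α × Set α) : Set α × Set α :=
  I ⊔ (OrderHom.lfp (opTrue P I), OrderHom.gfp (opFalse P I))

/-- The well-founded model of `P`: the least fixpoint of `IFP`
(as the infimum of all prefixpoints of the monotone operator `IFP`). -/
def WFM (P : Set (GRule α)) : Set α × Set α :=
  sInf {I | IFP P I ≤ I}

/-- The WF reduct of `P`: delete rules whose positive body meets the false atoms or whose
negative body meets the true atoms of the WFM, and remove from the remaining rules the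
true atoms from positive bodies and the false atoms from negative bodies. -/
noncomputable def WFreduct (P : Set (GRule α)) : Set (GRule α) :=
  {r' | ∃ r ∈ P, (∀ b ∈ r.pos, b ∉ (WFM P).2) ∧ (∀ c ∈ r.neg, c ∉ (WFM P).1) ∧
    r' = ⟨r.head, r.pos.filter (fun b => b ∉ (WFM P).1),
          r.neg.filter (fun c => c ∉ (WFM P).2)⟩}

/-- The set of atoms occurring in a set of rules (as heads or in bodies). -/
def atomsOf (R : Set (GRule α)) : Set α :=
  {a | ∃ r ∈ R, a = r.head ∨ a ∈ r.pos ∨ a ∈ r.neg}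

/-- `R` is a relevance-closed subprogram of `P`. -/
def RelevanceClosed (P R : Set (GRule α)) : Prop :=
  R ⊆ P ∧ ∀ r ∈ P, r.head ∈ atomsOf R → r ∈ R

/-- Signed edge of the dependency graph of `P`; `s = true` marks a negative edge. -/
def Edge (P : Set (GRule α)) (x y : α) (s : Bool) : Prop :=
  ∃ r ∈ P, r.head = x ∧ ((s = false ∧ y ∈ r.pos) ∨ (s = true ∧ y ∈ r.neg))

/-- `Reaches P x y b`: there is a nonempty walk in the signed dependency graph from `x`
to `y` whose number of negative edges has parity `b` (`true` = odd). -/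
inductive Reaches (P : Set (GRule α)) : α → α → Bool → Prop
  | single {x y s} : Edge P x y s → Reaches P x y s
  | step {x y z s t} : Edge P x y s → Reaches P y z t → Reaches P x z (xor s t)

/-- `P` has no odd loops over negation. -/
def OLONFree (P : Set (GRule α)) : Prop := ∀ a : α, ¬ Reaches P a a true

/-- The program of a world `w`: `P₀` plus the facts `aᵢ` for `i ∈ w`. -/
def worldProg (P0 : Set (GRule α)) (atom : ι → α) (w : Finset ι) : Set (GRule α) :=
  P0 ∪ {r | ∃ i ∈ w, r = ⟨atom i, ∅, ∅⟩}

/-- The probability of a world `w` of a PASP with index set `S`. -/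
noncomputable def worldP (prob : ι → ℝ) (S w : Finset ι) : ℝ :=
  (∏ i ∈ w, prob i) * ∏ i ∈ S \ w, (1 - prob i)

/-- The upper probability of a query `q` in the PASP `(P₀, S, atom, prob)`. -/
noncomputable def UP (P0 : Set (GRule α)) (atom : ι → α) (prob : ι → ℝ)
    (S : Finset ι) (q : α) : ℝ :=
  ∑ w ∈ S.powerset.filter (fun w => ∃ A ∈ AS (worldProg P0 atom w), q ∈ A),
    worldP prob S w

/-- The lower probability of a query `q` in the PASP `(P₀, S, atom, prob)`. -/
noncomputable def LP (P0 : Set (GRule α)) (atom : ι → α) (prob : ι → ℝ)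
    (S : Finset ι) (q : α) : ℝ :=
  ∑ w ∈ S.powerset.filter (fun w => ∀ A ∈ AS (worldProg P0 atom w), q ∈ A),
    worldP prob S w

/-- `(P₀, S, atom, prob)` is a PASP: `P₀` is finite, the probabilistic atoms are pairwise
distinct, none of them is the head of a rule of `P₀`, and probabilities lie in `[0,1]`. -/
def IsPASP (P0 : Set (GRule α)) (atom : ι → α) (prob : ι → ℝ) (S : Finset ι) : Prop :=
  P0.Finite ∧ Set.InjOn atom ↑S ∧ (∀ i ∈ S, ∀ r ∈ P0, r.head ≠ atom i) ∧
    ∀ i ∈ S, prob i ∈ Set.Icc (0 : ℝ) 1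

end ASP

/-!
Relevance closure makes the atoms `B` of `R` a splitting set of every world program, whose
bottom is the world program of `R` on the facts indexed by `ι_R`. By the splitting set
theorem an answer set restricts to an answer set of the bottom; conversely an answer set `X`
of the bottom extends to one of the whole program as soon as the top, partially evaluated
at `X`, has an answer set, and it does by Dung's theorem since it is finite and OLON-free.
So `q` is a brave consequence of world `w` exactly when it is one of `w ∩ ι_R` in `R`, and
the facts outside `ι_R` sum out of the upper probability.

Dung's theorem goes by induction on the number of atoms: a bottom strongly connected
component of the dependency graph is signed by the parity of paths from one of its atoms
(paths to a common atom have the same parity, as there is no odd cycle), a signed program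
has an answer set built from a fixpoint of `Γ²`, and the rest of the program is evaluated
at that answer set.
-/

namespace ASP

variable {α ι : Type}

section LeastModel

def leastModel (Q : Set (α × Finset α)) : Set α := ⋂₀ {J | IsModelPos Q J}

lemma isModelPos_leastModel (Q : Set (α × Finset α)) : IsModelPos Q (leastModel Q) :=
  fun hb hq hbody => Set.mem_sInter.mpr fun J hJ =>
    hJ hb hq fun b hb' => Set.mem_sInter.mp (hbody b hb') J hJ

lemma leastModel_subset {Q : Set (α × Finset α)} {J : Set α} (h : IsModelPos Q J) :
    leastModel Q ⊆ J :=
  Set.sInter_subset_of_mem h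

lemma leastModel_mono {Q Q' : Set (α × Finset α)} (h : Q ⊆ Q') :
    leastModel Q ⊆ leastModel Q' :=
  Set.sInter_subset_sInter fun _ hJ hb hq => hJ hb (h hq)

lemma leastModel_subset_heads (Q : Set (α × Finset α)) : leastModel Q ⊆ Prod.fst '' Q := by
  refine fun a ha => (leastModel_subset (J := leastModel Q ∩ Prod.fst '' Q) ?_ ha).2
  intro hb hq hbody
  exact ⟨isModelPos_leastModel Q hb hq fun b hb' => (hbody b hb').1, hb, hq, rfl⟩

lemma leastModel_inter {Q : Set (α × Finset α)} {B : Set α}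
    (hB : ∀ hb ∈ Q, hb.1 ∈ B → ∀ b ∈ hb.2, b ∈ B) :
    leastModel Q ∩ B = leastModel {hb ∈ Q | hb.1 ∈ B} := by
  have hsub : leastModel {hb ∈ Q | hb.1 ∈ B} ⊆ B := fun a ha => by
    obtain ⟨hb, hhb, rfl⟩ := leastModel_subset_heads _ ha
    exact hhb.2
  refine Set.Subset.antisymm ?_ fun a ha => ⟨leastModel_mono (Set.sep_subset _ _) ha, hsub ha⟩
  have hmod : IsModelPos Q (leastModel {hb ∈ Q | hb.1 ∈ B} ∪ Bᶜ) := by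
    intro hb hq hbody
    by_cases hhead : hb.1 ∈ B
    · exact Or.inl (isModelPos_leastModel _ hb ⟨hq, hhead⟩ fun b hbm =>
        (hbody b hbm).resolve_right fun hb' => hb' (hB hb hq hhead b hbm))
    · exact Or.inr hhead
  rintro a ⟨haQ, haB⟩
  exact (leastModel_subset hmod haQ).resolve_right fun ha' => ha' haB

end LeastModel

section GLReduct

/-- The Gelfond–Lifschitz operator `Γ_P`. -/
def glOp (P : Set (GRule α)) (I : Set α) : Set α := leastModel (glReduct P I)

theorem mem_AS_iff {P : Set (GRule α)} {A : Set α} : A ∈ AS P ↔ glOp P A = A := by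
  constructor
  · rintro ⟨hmod, hmin⟩
    by_contra hne
    exact hmin _ ((leastModel_subset hmod).ssubset_of_ne hne) (isModelPos_leastModel _)
  · intro h
    exact ⟨(congrArg _ h).mp (isModelPos_leastModel _),
      fun B hB hBmod => hB.2 (h.symm.subset.trans (leastModel_subset hBmod))⟩

lemma subset_heads_of_mem_AS {P : Set (GRule α)} {A : Set α} (hA : A ∈ AS P) :
    A ⊆ GRule.head '' P := by
  intro a ha
  rw [← mem_AS_iff.mp hA] at ha
  obtain ⟨_, ⟨r, hr, -, rfl⟩, rfl⟩ := leastModel_subset_heads _ ha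
  exact ⟨r, hr, rfl⟩

lemma empty_mem_AS_empty : (∅ : Set α) ∈ AS (∅ : Set (GRule α)) :=
  mem_AS_iff.mpr (Set.subset_empty_iff.mp (leastModel_subset fun _ ⟨_, hr, _⟩ => hr.elim))

lemma glReduct_antitone (P : Set (GRule α)) : Antitone (glReduct P) := by
  rintro I I' hI _ ⟨r, hr, hneg, rfl⟩
  exact ⟨r, hr, fun c hc hcI => hneg c hc (hI hcI), rfl⟩

lemma glOp_antitone (P : Set (GRule α)) : Antitone (glOp P) :=
  fun _ _ hI => leastModel_mono (glReduct_antitone P hI)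

lemma glReduct_congr {P : Set (GRule α)} {I I' : Set α}
    (h : ∀ r ∈ P, ∀ c ∈ r.neg, (c ∈ I ↔ c ∈ I')) : glReduct P I = glReduct P I' := by
  ext hb
  constructor
  · rintro ⟨r, hr, hneg, rfl⟩
    exact ⟨r, hr, fun c hc hcI => hneg c hc ((h r hr c hc).mpr hcI), rfl⟩
  · rintro ⟨r, hr, hneg, rfl⟩
    exact ⟨r, hr, fun c hc hcI => hneg c hc ((h r hr c hc).mp hcI), rfl⟩

lemma glReduct_sep_head (P : Set (GRule α)) (B I : Set α) :
    {hb ∈ glReduct P I | hb.1 ∈ B} = glReduct {r ∈ P | r.head ∈ B} I := by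
  ext hb
  constructor
  · rintro ⟨⟨r, hr, hneg, rfl⟩, hB⟩
    exact ⟨r, ⟨hr, hB⟩, hneg, rfl⟩
  · rintro ⟨r, ⟨hr, hB⟩, hneg, rfl⟩
    exact ⟨⟨r, hr, hneg, rfl⟩, hB⟩

lemma glOp_sep_head {P : Set (GRule α)} {B : Set α}
    (hpos : ∀ r ∈ P, r.head ∈ B → ∀ b ∈ r.pos, b ∈ B) (I : Set α) :
    glOp {r ∈ P | r.head ∈ B} I = glOp P I ∩ B := by
  rw [glOp, glOp, leastModel_inter, glReduct_sep_head]
  rintro _ ⟨r, hr, -, rfl⟩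
  exact hpos r hr

lemma glOp_inter_congr {P : Set (GRule α)} {B I I' : Set α}
    (hpos : ∀ r ∈ P, r.head ∈ B → ∀ b ∈ r.pos, b ∈ B)
    (hneg : ∀ r ∈ P, r.head ∈ B → ∀ c ∈ r.neg, (c ∈ I ↔ c ∈ I')) :
    glOp P I ∩ B = glOp P I' ∩ B := by
  rw [← glOp_sep_head hpos, ← glOp_sep_head hpos]
  exact congrArg leastModel (glReduct_congr fun r hr => hneg r hr.1 hr.2)

end GLReduct

section Splitting

variable {P : Set (GRule α)} {B : Set α}

def IsSplittingSet (P : Set (GRule α)) (B : Set α) : Prop :=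
  ∀ r ∈ P, r.head ∈ B → (∀ b ∈ r.pos, b ∈ B) ∧ ∀ c ∈ r.neg, c ∈ B

/-- Lifschitz–Turner's partial evaluation `e_B(P \ b_B(P), X)` of the top of `P`
at an answer set `X` of the bottom. -/
def evalTop (P : Set (GRule α)) (B X : Set α) : Set (GRule α) :=
  {r' | ∃ r ∈ P, r.head ∉ B ∧ (∀ b ∈ r.pos, b ∈ B → b ∈ X) ∧
    (∀ c ∈ r.neg, c ∈ B → c ∉ X) ∧
    r' = ⟨r.head, r.pos.filter (fun b => b ∉ B), r.neg.filter (fun c => c ∉ B)⟩}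

theorem IsSplittingSet.inter_mem_AS (hB : IsSplittingSet P B) {A : Set α} (hA : A ∈ AS P) :
    A ∩ B ∈ AS {r ∈ P | r.head ∈ B} := by
  rw [mem_AS_iff] at hA ⊢
  have hpos : ∀ r ∈ P, r.head ∈ B → ∀ b ∈ r.pos, b ∈ B :=
    fun r hr hh => (hB r hr hh).1
  rw [glOp_sep_head hpos, glOp_inter_congr (I := A ∩ B) (I' := A) hpos
    fun r hr hh c hc => ⟨fun h => h.1, fun h => ⟨h, (hB r hr hh).2 c hc⟩⟩, hA]

theorem IsSplittingSet.union_mem_AS (hB : IsSplittingSet P B) {X Y : Set α}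
    (hX : X ∈ AS {r ∈ P | r.head ∈ B}) (hY : Y ∈ AS (evalTop P B X)) :
    X ∪ Y ∈ AS P := by
  have hXB : X ⊆ B := fun a ha => by
    obtain ⟨r, ⟨-, hr⟩, rfl⟩ := subset_heads_of_mem_AS hX ha
    exact hr
  have hYB : ∀ a ∈ Y, a ∉ B := fun a ha => by
    obtain ⟨_, ⟨r, -, hr, -, -, rfl⟩, rfl⟩ := subset_heads_of_mem_AS hY ha
    exact hr
  rw [mem_AS_iff] at hX hY ⊢
  have hXM : X ⊆ glOp P (X ∪ Y) := by
    refine hX.symm.subset.trans (leastModel_mono ?_)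
    rintro _ ⟨r, ⟨hr, hh⟩, hneg, rfl⟩
    refine ⟨r, hr, fun c hc => ?_, rfl⟩
    rintro (hcX | hcY)
    exacts [hneg c hc hcX, hYB c hcY ((hB r hr hh).2 c hc)]
  have hYM : Y ⊆ glOp P (X ∪ Y) := by
    refine hY.symm.subset.trans (leastModel_subset ?_)
    rintro _ ⟨_, ⟨r, hr, -, hposB, hnegB, rfl⟩, hnegY, rfl⟩ hbody
    refine isModelPos_leastModel _ (r.head, r.pos) ⟨r, hr, fun c hc => ?_, rfl⟩ fun b hb => ?_
    · rintro (hcX | hcY)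
      · exact hnegB c hc (hXB hcX) hcX
      · by_cases hcB : c ∈ B
        · exact hYB c hcY hcB
        · exact hnegY c (Finset.mem_filter.mpr ⟨hc, hcB⟩) hcY
    · by_cases hbB : b ∈ B
      · exact hXM (hposB b hb hbB)
      · exact hbody b (Finset.mem_filter.mpr ⟨hb, hbB⟩)
  refine (leastModel_subset ?_).antisymm (Set.union_subset hXM hYM)
  rintro _ ⟨r, hr, hneg, rfl⟩ hbody
  by_cases hh : r.head ∈ B
  · refine Or.inl (hX.subset (isModelPos_leastModel _ (r.head, r.pos)
      ⟨r, ⟨hr, hh⟩, fun c hc hcX => hneg c hc (Or.inl hcX), rfl⟩ fun b hb => ?_))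
    exact hX.symm.subset <| (hbody b hb).resolve_right fun hbY => hYB b hbY ((hB r hr hh).1 b hb)
  · have hr' : (⟨r.head, r.pos.filter (· ∉ B), r.neg.filter (· ∉ B)⟩ : GRule α)
        ∈ evalTop P B X :=
      ⟨r, hr, hh, fun b hb hbB => (hbody b hb).resolve_right fun hbY => hYB b hbY hbB,
        fun c hc _ hcX => hneg c hc (Or.inl hcX), rfl⟩
    refine Or.inr (hY.subset (isModelPos_leastModel _ (r.head, r.pos.filter (· ∉ B))
      ⟨_, hr', fun c hc hcY => hneg c (Finset.mem_filter.mp hc).1 (Or.inr hcY), rfl⟩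
      fun b hb => ?_))
    obtain ⟨hb, hbB⟩ := Finset.mem_filter.mp hb
    exact hY.symm.subset <| (hbody b hb).resolve_left fun hbX => hbB (hXB hbX)

end Splitting

section Signing

def IsSigning (P : Set (GRule α)) (S : Set α) : Prop :=
  ∀ r ∈ P, (∀ b ∈ r.pos, b ∈ S ↔ r.head ∈ S) ∧
    ∀ c ∈ r.neg, c ∈ S ↔ r.head ∉ S

theorem exists_mem_AS_of_isSigning {P : Set (GRule α)} {S : Set α} (hS : IsSigning P S) :
    ∃ A, A ∈ AS P := by
  obtain ⟨L, hL⟩ : ∃ L, glOp P (glOp P L) = L :=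
    ⟨_, OrderHom.map_lfp
      ⟨fun I => glOp P (glOp P I), fun _ _ h => glOp_antitone P (glOp_antitone P h)⟩⟩
  have hposS : ∀ r ∈ P, r.head ∈ S → ∀ b ∈ r.pos, b ∈ S :=
    fun r hr hh b hb => ((hS r hr).1 b hb).mpr hh
  have hposSc : ∀ r ∈ P, r.head ∈ Sᶜ → ∀ b ∈ r.pos, b ∈ Sᶜ :=
    fun r hr hh b hb => mt ((hS r hr).1 b hb).mp hh
  -- Rules with head in `S` look at negated atoms outside `S` only, and vice versa, so `A`
  -- reproduces `Γ L` on `S` and `Γ (Γ L) = L` off `S`.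
  set A := glOp P L ∩ S ∪ L \ S
  have hA_on_S : glOp P A ∩ S = glOp P L ∩ S := by
    refine glOp_inter_congr hposS fun r hr hh c hc => ?_
    have hcS : c ∉ S := fun hcS => ((hS r hr).2 c hc).mp hcS hh
    simp [A, hcS]
  have hA_off_S : glOp P A ∩ Sᶜ = L ∩ Sᶜ := by
    rw [← hL]
    refine glOp_inter_congr hposSc fun r hr hh c hc => ?_
    have hcS : c ∈ S := ((hS r hr).2 c hc).mpr hh
    simp [A, hcS]
  refine ⟨A, mem_AS_iff.mpr ?_⟩
  rw [← Set.inter_union_compl (glOp P A) S, hA_on_S, hA_off_S]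
  rfl

end Signing

section Dependency

variable {P : Set (GRule α)}

theorem Reaches.trans {x y z : α} {s t : Bool} (h₁ : Reaches P x y s) (h₂ : Reaches P y z t) :
    Reaches P x z (xor s t) := by
  induction h₁ with
  | single e => exact .step e h₂
  | step e _ ih => simpa only [Bool.xor_assoc] using Reaches.step e (ih h₂)

theorem Reaches.mono {P' : Set (GRule α)} (h : ∀ x y s, Edge P x y s → Edge P' x y s)
    {x y : α} {b : Bool} (hr : Reaches P x y b) : Reaches P' x y b := by
  induction hr with
  | single e => exact .single (h _ _ _ e)
  | step e _ ih => exact .step (h _ _ _ e) ih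

theorem OLONFree.mono {P' : Set (GRule α)} (h : ∀ x y s, Edge P x y s → Edge P' x y s)
    (h' : OLONFree P') : OLONFree P :=
  fun a ha => h' a (ha.mono h)

lemma Edge.mem_atomsOf {x y : α} {s : Bool} (h : Edge P x y s) : y ∈ atomsOf P := by
  obtain ⟨r, hr, -, ⟨-, hy⟩ | ⟨-, hy⟩⟩ := h
  exacts [⟨r, hr, Or.inr (Or.inl hy)⟩, ⟨r, hr, Or.inr (Or.inr hy)⟩]

lemma Reaches.mem_atomsOf {x y : α} {b : Bool} (h : Reaches P x y b) : y ∈ atomsOf P := by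
  induction h with
  | single e => exact e.mem_atomsOf
  | step _ _ ih => exact ih

def reachSet (P : Set (GRule α)) (x : α) : Set α := {y | y = x ∨ ∃ b, Reaches P x y b}

lemma mem_reachSet_self (x : α) : x ∈ reachSet P x := Or.inl rfl

lemma mem_reachSet_of_edge {x y z : α} {s : Bool} (hy : y ∈ reachSet P x) (he : Edge P y z s) :
    z ∈ reachSet P x := by
  rcases hy with rfl | ⟨b, hb⟩
  exacts [Or.inr ⟨s, .single he⟩, Or.inr ⟨_, hb.trans (.single he)⟩]

lemma reachSet_subset_reachSet {x y : α} (hy : y ∈ reachSet P x) :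
    reachSet P y ⊆ reachSet P x := by
  rintro z (rfl | ⟨b, hb⟩)
  · exact hy
  rcases hy with rfl | ⟨b', hb'⟩
  exacts [Or.inr ⟨b, hb⟩, Or.inr ⟨_, hb'.trans hb⟩]

lemma reachSet_subset_atomsOf {x : α} (hx : x ∈ atomsOf P) : reachSet P x ⊆ atomsOf P := by
  rintro y (rfl | ⟨b, hb⟩)
  exacts [hx, hb.mem_atomsOf]

lemma isSplittingSet_reachSet (x : α) : IsSplittingSet P (reachSet P x) :=
  fun r hr hh => ⟨fun _ hb => mem_reachSet_of_edge hh ⟨r, hr, rfl, Or.inl ⟨rfl, hb⟩⟩,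
    fun _ hc => mem_reachSet_of_edge hh ⟨r, hr, rfl, Or.inr ⟨rfl, hc⟩⟩⟩

/-- An atom whose reach set has least cardinality lies in a bottom strongly connected
component. -/
lemma exists_reachSet_strongly_connected (hfin : (atomsOf P).Finite)
    (hne : (atomsOf P).Nonempty) :
    ∃ x ∈ atomsOf P, ∀ y ∈ reachSet P x, x ∈ reachSet P y := by
  obtain ⟨x, hx, hmin⟩ :=
    Set.exists_min_image (atomsOf P) (fun a => (reachSet P a).ncard) hfin hne
  refine ⟨x, hx, fun y hy => ?_⟩
  by_contra hxy
  have hlt : (reachSet P y).ncard < (reachSet P x).ncard :=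
    Set.ncard_lt_ncard ⟨reachSet_subset_reachSet hy, fun h => hxy (h (mem_reachSet_self x))⟩
      (hfin.subset (reachSet_subset_atomsOf hx))
  exact (hmin y (reachSet_subset_atomsOf hx hy)).not_gt hlt

def evenReachSet (P : Set (GRule α)) (x : α) : Set α := {y | y = x ∨ Reaches P x y false}

variable {x : α} (holon : OLONFree P) (hback : ∀ y ∈ reachSet P x, x ∈ reachSet P y)
include holon hback

lemma notMem_evenReachSet_of_reaches_true {y : α} (h : Reaches P x y true) :
    y ∉ evenReachSet P x := by
  rintro (rfl | heven)
  · exact holon _ h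
  rcases hback y (Or.inr ⟨_, h⟩) with rfl | ⟨t, ht⟩
  · exact holon _ h
  cases t
  · exact holon _ (h.trans ht)
  · exact holon _ (heven.trans ht)

lemma mem_evenReachSet_iff {y : α} {β : Bool} (h : Reaches P x y β) :
    y ∈ evenReachSet P x ↔ β = false := by
  cases β
  · exact ⟨fun _ => rfl, fun _ => Or.inr h⟩
  · simpa using notMem_evenReachSet_of_reaches_true holon hback h

lemma reaches_of_edge {h y : α} {s : Bool} (hh : h ∈ reachSet P x) (he : Edge P h y s) :
    Reaches P x y (xor (decide (h ∉ evenReachSet P x)) s) := by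
  rcases hh with rfl | ⟨b, hb⟩
  · simpa [evenReachSet] using Reaches.single he
  · have hparity := mem_evenReachSet_iff holon hback hb
    cases b <;> simpa [hparity] using hb.trans (.single he)

theorem isSigning_evenReachSet :
    IsSigning {r ∈ P | r.head ∈ reachSet P x} (evenReachSet P x) := by
  rintro r ⟨hr, hh⟩
  have hparity {y : α} {s : Bool} (he : Edge P r.head y s) :=
    mem_evenReachSet_iff holon hback (reaches_of_edge holon hback hh he)
  refine ⟨fun b hb => ?_, fun c hc => ?_⟩
  · simpa using hparity ⟨r, hr, rfl, Or.inl ⟨rfl, hb⟩⟩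
  · simpa using hparity ⟨r, hr, rfl, Or.inr ⟨rfl, hc⟩⟩

end Dependency

section Dung

lemma atomsOf_finite {P : Set (GRule α)} (h : P.Finite) : (atomsOf P).Finite := by
  refine (h.biUnion fun r _ =>
    (r.pos.finite_toSet.union r.neg.finite_toSet).insert r.head).subset ?_
  rintro a ⟨r, hr, ha⟩
  exact Set.mem_biUnion hr ha

lemma evalTop_finite {P : Set (GRule α)} (h : P.Finite) (B X : Set α) :
    (evalTop P B X).Finite := by
  refine (h.image fun r =>
    (⟨r.head, r.pos.filter (· ∉ B), r.neg.filter (· ∉ B)⟩ : GRule α)).subset ?_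
  rintro _ ⟨r, hr, -, -, -, rfl⟩
  exact ⟨r, hr, rfl⟩

lemma OLONFree.evalTop {P : Set (GRule α)} (holon : OLONFree P) (B X : Set α) :
    OLONFree (evalTop P B X) := by
  refine holon.mono ?_
  rintro x y s ⟨_, ⟨r, hr, -, -, -, rfl⟩, hh, ⟨hs, hb⟩ | ⟨hs, hb⟩⟩
  · exact ⟨r, hr, hh, Or.inl ⟨hs, (Finset.mem_filter.mp hb).1⟩⟩
  · exact ⟨r, hr, hh, Or.inr ⟨hs, (Finset.mem_filter.mp hb).1⟩⟩

lemma atomsOf_evalTop_subset {P : Set (GRule α)} {B X : Set α} :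
    atomsOf (evalTop P B X) ⊆ atomsOf P \ B := by
  rintro a ⟨_, ⟨r, hr, hB, -, -, rfl⟩, rfl | ha | ha⟩
  · exact ⟨⟨r, hr, Or.inl rfl⟩, hB⟩
  · obtain ⟨ha, haB⟩ := Finset.mem_filter.mp ha
    exact ⟨⟨r, hr, Or.inr (Or.inl ha)⟩, haB⟩
  · obtain ⟨ha, haB⟩ := Finset.mem_filter.mp ha
    exact ⟨⟨r, hr, Or.inr (Or.inr ha)⟩, haB⟩

/-- Dung's theorem. -/
theorem exists_mem_AS_of_olonFree {P : Set (GRule α)} (hfin : P.Finite) (holon : OLONFree P) :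
    ∃ A, A ∈ AS P := by
  induction hn : (atomsOf P).ncard using Nat.strong_induction_on generalizing P with
  | _ n ih =>
  rcases P.eq_empty_or_nonempty with rfl | ⟨r, hr⟩
  · exact ⟨∅, empty_mem_AS_empty⟩
  have hfinA := atomsOf_finite hfin
  obtain ⟨x, hx, hback⟩ :=
    exists_reachSet_strongly_connected hfinA ⟨r.head, r, hr, Or.inl rfl⟩
  obtain ⟨X, hX⟩ := exists_mem_AS_of_isSigning (isSigning_evenReachSet holon hback)
  have hlt : (atomsOf (evalTop P (reachSet P x) X)).ncard < n := by
    refine hn ▸ Set.ncard_lt_ncard ((Set.ssubset_iff_of_subset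
      (atomsOf_evalTop_subset.trans Set.sdiff_subset)).mpr ⟨x, hx, fun h => ?_⟩) hfinA
    exact (atomsOf_evalTop_subset h).2 (mem_reachSet_self x)
  obtain ⟨Y, hY⟩ := ih _ hlt (evalTop_finite hfin _ _) (holon.evalTop _ _) rfl
  exact ⟨X ∪ Y, (isSplittingSet_reachSet x).union_mem_AS hX hY⟩

theorem IsSplittingSet.exists_mem_AS_iff {P : Set (GRule α)} {B : Set α} (hB : IsSplittingSet P B)
    (hfin : P.Finite) (holon : OLONFree P) {q : α} (hq : q ∈ B) :
    (∃ A ∈ AS P, q ∈ A) ↔ ∃ X ∈ AS {r ∈ P | r.head ∈ B}, q ∈ X := by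
  refine ⟨fun ⟨A, hA, hqA⟩ => ⟨A ∩ B, hB.inter_mem_AS hA, hqA, hq⟩,
    fun ⟨X, hX, hqX⟩ => ?_⟩
  obtain ⟨Y, hY⟩ := exists_mem_AS_of_olonFree (evalTop_finite hfin B X) (holon.evalTop B X)
  exact ⟨X ∪ Y, hB.union_mem_AS hX hY, Or.inl hqX⟩

end Dung

section PASP

lemma worldProg_finite {P0 : Set (GRule α)} (h : P0.Finite) (atom : ι → α) (w : Finset ι) :
    (worldProg P0 atom w).Finite := by
  refine h.union (((w.finite_toSet).image fun i => (⟨atom i, ∅, ∅⟩ : GRule α)).subset ?_)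
  rintro _ ⟨i, hi, rfl⟩
  exact ⟨i, hi, rfl⟩

lemma OLONFree.worldProg {P0 : Set (GRule α)} (holon : OLONFree P0) (atom : ι → α)
    (w : Finset ι) : OLONFree (worldProg P0 atom w) := by
  refine holon.mono ?_
  rintro x y s ⟨r, hr | ⟨i, -, rfl⟩, hh, hb⟩
  · exact ⟨r, hr, hh, hb⟩
  · rcases hb with ⟨-, hb⟩ | ⟨-, hb⟩ <;> simp at hb

variable {P0 R : Set (GRule α)}

lemma RelevanceClosed.isSplittingSet_worldProg (hrel : RelevanceClosed P0 R) (atom : ι → α)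
    (w : Finset ι) : IsSplittingSet (worldProg P0 atom w) (atomsOf R) := by
  rintro r (hr | ⟨i, -, rfl⟩) hh
  · have hrR := hrel.2 r hr hh
    exact ⟨fun b hb => ⟨r, hrR, Or.inr (Or.inl hb)⟩,
      fun c hc => ⟨r, hrR, Or.inr (Or.inr hc)⟩⟩
  · simp

lemma RelevanceClosed.worldProg_sep_head (hrel : RelevanceClosed P0 R) (atom : ι → α)
    (w : Finset ι) :
    {r ∈ worldProg P0 atom w | r.head ∈ atomsOf R}
      = worldProg R atom (w.filter fun i => atom i ∈ atomsOf R) := by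
  ext r
  constructor
  · rintro ⟨hr | ⟨i, hi, rfl⟩, hh⟩
    exacts [Or.inl (hrel.2 r hr hh), Or.inr ⟨i, Finset.mem_filter.mpr ⟨hi, hh⟩, rfl⟩]
  · rintro (hr | ⟨i, hi, rfl⟩)
    · exact ⟨Or.inl (hrel.1 hr), r, hr, Or.inl rfl⟩
    · obtain ⟨hi, hh⟩ := Finset.mem_filter.mp hi
      exact ⟨Or.inr ⟨i, hi, rfl⟩, hh⟩

lemma worldP_insert_of_notMem (prob : ι → ℝ) {a : ι} {S w : Finset ι} (ha : a ∉ S)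
    (hw : w ⊆ S) : worldP prob (insert a S) w = (1 - prob a) * worldP prob S w := by
  rw [worldP, worldP, Finset.insert_sdiff_of_notMem _ fun h => ha (hw h),
    Finset.prod_insert fun h => ha (Finset.mem_sdiff.mp h).1]
  ring

lemma worldP_insert_insert (prob : ι → ℝ) {a : ι} {S w : Finset ι} (ha : a ∉ S)
    (hw : w ⊆ S) : worldP prob (insert a S) (insert a w) = prob a * worldP prob S w := by
  rw [worldP, worldP, Finset.insert_sdiff_insert, Finset.sdiff_insert_of_notMem ha,
    Finset.prod_insert fun h => ha (hw h)]
  ring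

lemma sum_worldP_union_filter_inter (prob : ι → ℝ) (p : Finset ι → Prop) (S : Finset ι)
    {T : Finset ι} (hST : Disjoint S T) :
    ∑ w ∈ (S ∪ T).powerset with p (w ∩ S), worldP prob (S ∪ T) w
      = ∑ v ∈ S.powerset with p v, worldP prob S v := by
  induction T using Finset.induction_on with
  | empty =>
    rw [Finset.union_empty]
    refine Finset.sum_congr (Finset.filter_congr fun w hw => ?_) fun _ _ => rfl
    rw [Finset.inter_eq_left.mpr (Finset.mem_powerset.mp hw)]
  | @insert a T ha ih =>
    have haS : a ∉ S := Finset.disjoint_right.mp hST (Finset.mem_insert_self a T)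
    have haST : a ∉ S ∪ T := by simp [haS, ha]
    rw [← ih (hST.mono_right (Finset.subset_insert a T)), Finset.union_insert,
      Finset.sum_filter, Finset.sum_filter, Finset.sum_powerset_insert haST,
      ← Finset.sum_add_distrib]
    refine Finset.sum_congr rfl fun w hw => ?_
    have hw := Finset.mem_powerset.mp hw
    rw [Finset.insert_inter_of_notMem haS, worldP_insert_of_notMem prob haST hw,
      worldP_insert_insert prob haST hw]
    split_ifs <;> ring

lemma sum_worldP_filter_inter (prob : ι → ℝ) (p : Finset ι → Prop) {S' S : Finset ι}
    (h : S' ⊆ S) :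
    ∑ w ∈ S.powerset with p (w ∩ S'), worldP prob S w
      = ∑ v ∈ S'.powerset with p v, worldP prob S' v := by
  simpa only [Finset.union_sdiff_of_subset h]
    using sum_worldP_union_filter_inter prob p S' (T := S \ S') Finset.disjoint_sdiff

end PASP

end ASP

open ASP in
/-- For an OLON-free PASP and a relevance-closed subprogram `R` of `P₀`
containing the query atom `q`, the upper probability of `q` equals the upper probability
of `q` in the PASP on `R` restricted to the probabilistic indices whose atom occurs in `R`. -/
theorem UP_residual {α ι : Type} (P0 : Set (GRule α)) (atom : ι → α)
    (prob : ι → ℝ) (S : Finset ι) (q : α) (hpasp : IsPASP P0 atom prob S)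
    (holon : OLONFree P0) (R : Set (GRule α)) (hrel : RelevanceClosed P0 R)
    (hq : q ∈ atomsOf R) :
    UP P0 atom prob S q
      = UP R atom prob (S.filter fun i => atom i ∈ atomsOf R) q := by
  set SR := S.filter fun i => atom i ∈ atomsOf R
  calc UP P0 atom prob S q
      = ∑ w ∈ S.powerset with (∃ X ∈ AS (worldProg R atom (w ∩ SR)), q ∈ X),
          worldP prob S w := by
        refine Finset.sum_congr (Finset.filter_congr fun w hw => ?_) fun _ _ => rfl
        rw [Finset.inter_filter, Finset.inter_eq_left.mpr (Finset.mem_powerset.mp hw),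
          ← hrel.worldProg_sep_head]
        exact (hrel.isSplittingSet_worldProg atom w).exists_mem_AS_iff
          (worldProg_finite hpasp.1 atom w) (holon.worldProg atom w) hq
    _ = UP R atom prob SR q :=
        sum_worldP_filter_inter prob (fun v => ∃ X ∈ AS (worldProg R atom v), q ∈ X)
          (Finset.filter_subset _ S)
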